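/- arXiv:2001.02551 — 3 statements merged into one kernel-verified Lean document; each statement's English description precedes it below -/
import Mathlib

section
/- Let A, B be finite subsets of an additive abelian group Z, let G ⊆ A × B, and K > 1 with #G > #A·#B/K and #{a + b : (a, b) ∈ G} ≤ K·(#A)^{1/2}·(#B)^{1/2}. Then there exist subsets A' ⊆ A and B' ⊆ B with #A' ≳ #A/K, #B' ≳ #B/K, and #(A' + B') ≲ K^{O(1)}·(#A)^{1/2}·(#B)^{1/2}. -/
/-!
View `G` as a bipartite graph between `A` and `B`, and call a pair of vertices of `A` bad if it
has fewer than `#B / (256 K³)` common neighbours. Averaging over `b ∈ B` (Cauchy–Schwarz for the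
neighbourhood sizes, double counting for the bad pairs) produces a vertex `b₀` whose neighbourhood
`U` among the vertices of degree `≥ #B / (2K)` is large, `#A ≤ 3K #U`, and contains few bad pairs.
Discarding the vertices of `U` with many bad partners leaves `A'` with `#U ≤ 2 #A'`, and `B'` is
the set of vertices with at least `#A' / (4K)` neighbours in `A'`. Any `a ∈ A'` and `b ∈ B'` are
then joined by `≳ #A #B / K⁵` paths `a — b₁ — a₁ — b`, and each of them writes
`a + b = (a + b₁) - (a₁ + b₁) + (a₁ + b)` with all three terms in `S = {x + y : (x, y) ∈ G}`.
Hence `#(A' + B') · #A #B / K⁵ ≲ #S³ ≤ K³ (#A #B)^{3/2}`.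
-/

open Finset Pointwise

namespace BalogSzemerediGowers

section Averaging

variable {ι : Type*} (s : Finset ι) (f : ι → ℝ)

lemma sum_sub_card_mul_le_sum_filter_le {c : ℝ} (hc : 0 ≤ c) :
    ∑ x ∈ s, f x - #s * c ≤ ∑ x ∈ s with c ≤ f x, f x := by
  have hsmall : ∑ x ∈ s with ¬c ≤ f x, f x ≤ #s * c :=
    calc ∑ x ∈ s with ¬c ≤ f x, f x ≤ #{x ∈ s | ¬c ≤ f x} * c := by
          simpa using sum_le_card_nsmul _ f c fun x hx => (not_le.mp (mem_filter.mp hx).2).le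
      _ ≤ #s * c := by gcongr; exact filter_subset _ _
  linarith [sum_filter_add_sum_filter_not s (fun x => c ≤ f x) f]

lemma card_filter_lt_mul_le_sum (hf : ∀ x ∈ s, 0 ≤ f x) (c : ℝ) :
    #{x ∈ s | c < f x} * c ≤ ∑ x ∈ s, f x :=
  calc #{x ∈ s | c < f x} * c ≤ ∑ x ∈ s with c < f x, f x := by
        simpa using card_nsmul_le_sum _ f c fun x hx => (mem_filter.mp hx).2.le
    _ ≤ ∑ x ∈ s, f x := sum_le_sum_of_subset_of_nonneg (filter_subset _ _) fun x hx _ => hf x hx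

end Averaging

section Graph

variable {α β : Type*} (A : Finset α) (B : Finset β) (r : α → β → Prop) [∀ a b, Decidable (r a b)]

def codegree (a a' : α) : ℕ := #{b ∈ B | r a b ∧ r a' b}

noncomputable def popular (K : ℝ) : Finset α :=
  {a ∈ A | (#B : ℝ) / (2 * K) ≤ #(B.bipartiteAbove r a)}

/-- `(a₁, b₁) ∈ paths3 A B r a b` encodes the path `a — b₁ — a₁ — b`. -/
def paths3 (a : α) (b : β) : Finset (α × β) := {p ∈ A ×ˢ B | r a p.2 ∧ r p.1 p.2 ∧ r p.1 b}

lemma card_filter_product_eq_sum_card_bipartiteAbove :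
    #{p ∈ A ×ˢ B | r p.1 p.2} = ∑ a ∈ A, #(B.bipartiteAbove r a) := by
  simp only [card_filter, sum_product, bipartiteAbove]

lemma card_mul_card_lt_sum_popular {K : ℝ} (hK : 0 < K)
    (h : (#A * #B : ℝ) < K * ∑ a ∈ A, (#(B.bipartiteAbove r a) : ℝ)) :
    (#A * #B : ℝ) < 2 * K * ∑ a ∈ popular A B r K, (#(B.bipartiteAbove r a) : ℝ) := by
  have hdrop := sum_sub_card_mul_le_sum_filter_le A (fun a => (#(B.bipartiteAbove r a) : ℝ))
    (c := #B / (2 * K)) (by positivity)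
  rw [← popular] at hdrop
  have hK' : 2 * K * (#A * (#B / (2 * K))) = #A * #B := by field_simp
  nlinarith

lemma sum_card_filter_product_bipartiteBelow (X : Finset α) (p : α → α → Prop) [DecidableRel p] :
    ∑ b ∈ B, #{q ∈ X.bipartiteBelow r b ×ˢ X.bipartiteBelow r b | p q.1 q.2} =
      ∑ q ∈ X ×ˢ X with p q.1 q.2, codegree B r q.1 q.2 := by
  have hfilter : ∀ b, {q ∈ X.bipartiteBelow r b ×ˢ X.bipartiteBelow r b | p q.1 q.2} =
      {q ∈ X ×ˢ X | p q.1 q.2}.bipartiteBelow (fun q b => r q.1 b ∧ r q.2 b) b := by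
    intro b
    ext q
    simp only [mem_filter, mem_product, mem_bipartiteBelow]
    tauto
  simp only [hfilter, codegree]
  exact (sum_card_bipartiteAbove_eq_sum_card_bipartiteBelow _).symm

lemma exists_card_sq_sub_bad_pairs_ge (X : Finset α) (hB : B.Nonempty) {δ μ : ℝ}
    (hδ : 0 ≤ δ) (hμ : 0 ≤ μ) :
    ∃ b ∈ B, (∑ a ∈ X, (#(B.bipartiteAbove r a) : ℝ)) ^ 2 / #B - μ * #X ^ 2 * δ ≤
      #B * ((#(X.bipartiteBelow r b) : ℝ) ^ 2 - μ *
        #{q ∈ X.bipartiteBelow r b ×ˢ X.bipartiteBelow r b | (codegree B r q.1 q.2 : ℝ) < δ}) := by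
  set F : β → ℝ := fun b => (#(X.bipartiteBelow r b) : ℝ) ^ 2 - μ *
    #{q ∈ X.bipartiteBelow r b ×ˢ X.bipartiteBelow r b | (codegree B r q.1 q.2 : ℝ) < δ}
  obtain ⟨b, hb, hmax⟩ := exists_max_image B F hB
  refine ⟨b, hb, ?_⟩
  have hcs : (∑ a ∈ X, (#(B.bipartiteAbove r a) : ℝ)) ^ 2 / #B ≤
      ∑ b ∈ B, (#(X.bipartiteBelow r b) : ℝ) ^ 2 := by
    have hsum : ∑ a ∈ X, (#(B.bipartiteAbove r a) : ℝ) =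
        ∑ b ∈ B, (#(X.bipartiteBelow r b) : ℝ) := by
      exact_mod_cast sum_card_bipartiteAbove_eq_sum_card_bipartiteBelow r
    rw [div_le_iff₀ (by simpa using hB.card_pos), mul_comm, hsum]
    exact sq_sum_le_card_mul_sum_sq
  have hbad : ∑ b ∈ B, (#{q ∈ X.bipartiteBelow r b ×ˢ X.bipartiteBelow r b |
      (codegree B r q.1 q.2 : ℝ) < δ} : ℝ) ≤ #X ^ 2 * δ := by
    have hcount := congrArg (Nat.cast : ℕ → ℝ) (sum_card_filter_product_bipartiteBelow B r X
      (fun a a' => (codegree B r a a' : ℝ) < δ))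
    push_cast at hcount
    rw [hcount]
    calc ∑ q ∈ X ×ˢ X with (codegree B r q.1 q.2 : ℝ) < δ, (codegree B r q.1 q.2 : ℝ)
        ≤ #{q ∈ X ×ˢ X | (codegree B r q.1 q.2 : ℝ) < δ} * δ := by
          simpa using sum_le_card_nsmul _ _ δ fun q hq => (mem_filter.mp hq).2.le
      _ ≤ #X ^ 2 * δ := by
          gcongr
          exact_mod_cast (card_filter_le _ _).trans (card_product X X ▸ (sq (#X)).ge)
  calc _ ≤ ∑ b ∈ B, (#(X.bipartiteBelow r b) : ℝ) ^ 2 - μ * ∑ b ∈ B,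
        (#{q ∈ X.bipartiteBelow r b ×ˢ X.bipartiteBelow r b |
          (codegree B r q.1 q.2 : ℝ) < δ} : ℝ) := by nlinarith
    _ = ∑ b ∈ B, F b := by rw [sum_sub_distrib, mul_sum]
    _ ≤ #B * F b := by simpa using sum_le_card_nsmul B F (F b) hmax

lemma exists_large_nbhd_few_bad_pairs {K : ℝ} (hK : 0 < K)
    (h : (#A * #B : ℝ) < K * ∑ a ∈ A, (#(B.bipartiteAbove r a) : ℝ)) :
    ∃ b ∈ B, (#A : ℝ) ≤ 3 * K * #((popular A B r K).bipartiteBelow r b) ∧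
      32 * K * #{q ∈ (popular A B r K).bipartiteBelow r b ×ˢ (popular A B r K).bipartiteBelow r b |
        (codegree B r q.1 q.2 : ℝ) < #B / (256 * K ^ 3)} ≤
        (#((popular A B r K).bipartiteBelow r b) : ℝ) ^ 2 := by
  have hB : B.Nonempty := by
    rw [nonempty_iff_ne_empty]
    rintro rfl
    simp [bipartiteAbove] at h
  have hB0 : (0 : ℝ) < #B := by simpa using hB.card_pos
  obtain ⟨b, hb, hchoice⟩ := exists_card_sq_sub_bad_pairs_ge B r (popular A B r K) hB
    (δ := #B / (256 * K ^ 3)) (μ := 32 * K) (by positivity) (by positivity)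
  refine ⟨b, hb, ?_⟩
  set E := ∑ a ∈ popular A B r K, (#(B.bipartiteAbove r a) : ℝ)
  set u : ℝ := (#((popular A B r K).bipartiteBelow r b) : ℝ)
  set nbad : ℝ := (#{q ∈ (popular A B r K).bipartiteBelow r b ×ˢ
    (popular A B r K).bipartiteBelow r b | (codegree B r q.1 q.2 : ℝ) < #B / (256 * K ^ 3)} : ℝ)
  have hE : (#A * #B : ℝ) < 2 * K * E := card_mul_card_lt_sum_popular A B r hK h
  have hpop : (#(popular A B r K) : ℝ) ≤ #A := by
    exact_mod_cast card_le_card (filter_subset _ _)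
  have hEsq : (#A : ℝ) ^ 2 * #B / (4 * K ^ 2) < E ^ 2 / #B := by
    rw [div_lt_div_iff₀ (by positivity) hB0]
    nlinarith [mul_self_lt_mul_self (by positivity) hE]
  have hbadterm : 32 * K * (#(popular A B r K) : ℝ) ^ 2 * (#B / (256 * K ^ 3)) ≤
      (#A : ℝ) ^ 2 * #B / (8 * K ^ 2) := by
    rw [show 32 * K * (#(popular A B r K) : ℝ) ^ 2 * (#B / (256 * K ^ 3)) =
      (#(popular A B r K) : ℝ) ^ 2 * #B / (8 * K ^ 2) by field_simp; ring]
    gcongr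
  have hF : (#A : ℝ) ^ 2 < 8 * K ^ 2 * (u ^ 2 - 32 * K * nbad) := by
    have : (#A : ℝ) ^ 2 * #B / (8 * K ^ 2) < #B * (u ^ 2 - 32 * K * nbad) := by
      have h4 : (#A : ℝ) ^ 2 * #B / (4 * K ^ 2) = 2 * ((#A : ℝ) ^ 2 * #B / (8 * K ^ 2)) := by
        field_simp; ring
      linarith
    rw [div_lt_iff₀ (by positivity)] at this
    nlinarith
  have hnbad : 0 ≤ nbad := by positivity
  refine ⟨?_, by nlinarith [sq_nonneg (#A : ℝ)]⟩
  have hsq : (#A : ℝ) ^ 2 ≤ (3 * K * u) ^ 2 := by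
    nlinarith [mul_nonneg (pow_nonneg hK.le 3) hnbad, mul_nonneg (sq_nonneg K) (sq_nonneg u)]
  exact le_of_pow_le_pow_left₀ two_ne_zero (by positivity) hsq

lemma card_le_two_mul_card_filter_few_partners (U : Finset α) (p : α → α → Prop) [DecidableRel p]
    {t : ℝ} (ht : 0 < t) (h : 2 * t * #{q ∈ U ×ˢ U | p q.1 q.2} ≤ (#U : ℝ) ^ 2) :
    (#U : ℝ) ≤ 2 * #{a ∈ U | t * #{a' ∈ U | p a a'} ≤ (#U : ℝ)} := by
  have hpairs : (#{q ∈ U ×ˢ U | p q.1 q.2} : ℝ) = ∑ a ∈ U, (#{a' ∈ U | p a a'} : ℝ) := by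
    simp only [card_filter, sum_product]
    push_cast
    rfl
  have hmarkov := card_filter_lt_mul_le_sum U (fun a => t * #{a' ∈ U | p a a'})
    (fun a _ => by positivity) #U
  simp only [← mul_sum, ← hpairs] at hmarkov
  have hsplit := card_filter_add_card_filter_not (s := U)
    (fun a => t * #{a' ∈ U | p a a'} ≤ (#U : ℝ))
  simp only [not_le] at hsplit
  have hsplit' : (#{a ∈ U | t * #{a' ∈ U | p a a'} ≤ (#U : ℝ)} : ℝ) +
      #{a ∈ U | (#U : ℝ) < t * #{a' ∈ U | p a a'}} = #U := by exact_mod_cast hsplit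
  rcases (Nat.cast_nonneg (#U) : (0 : ℝ) ≤ #U).eq_or_lt with hU | hU
  · rw [← hU]; positivity
  · nlinarith

lemma card_le_two_mul_mul_card_filter_not_of_subset {U N : Finset α} (hNU : N ⊆ U)
    (q : α → Prop) [DecidablePred q] {t : ℝ} (ht : 0 ≤ t) (hq : 2 * t * #{x ∈ U | q x} ≤ (#U : ℝ))
    (hN : (#U : ℝ) ≤ t * #N) : (#U : ℝ) ≤ 2 * t * #{x ∈ N | ¬q x} := by
  have hsplit : (#{x ∈ N | q x} : ℝ) + #{x ∈ N | ¬q x} = #N := by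
    exact_mod_cast card_filter_add_card_filter_not _
  have hsub : (#{x ∈ N | q x} : ℝ) ≤ #{x ∈ U | q x} := by
    exact_mod_cast card_le_card (filter_subset_filter _ hNU)
  nlinarith [mul_le_mul_of_nonneg_left hsub ht]

lemma card_le_four_mul_card_filter_rich {K : ℝ} (hK : 0 < K) (A' : Finset α) (hA' : A'.Nonempty)
    (hdeg : ∀ a ∈ A', (#B : ℝ) / (2 * K) ≤ #(B.bipartiteAbove r a)) :
    (#B : ℝ) ≤ 4 * K * #{b ∈ B | (#A' : ℝ) / (4 * K) ≤ #(A'.bipartiteBelow r b)} := by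
  have hA'0 : (0 : ℝ) < #A' := by simpa using hA'.card_pos
  have hsum : (#A' : ℝ) * (#B / (2 * K)) ≤ ∑ b ∈ B, (#(A'.bipartiteBelow r b) : ℝ) := by
    have : ∑ a ∈ A', (#(B.bipartiteAbove r a) : ℝ) = ∑ b ∈ B, (#(A'.bipartiteBelow r b) : ℝ) := by
      exact_mod_cast sum_card_bipartiteAbove_eq_sum_card_bipartiteBelow r
    simpa [← this] using card_nsmul_le_sum A' _ _ hdeg
  have hrich := sum_sub_card_mul_le_sum_filter_le B (fun b => (#(A'.bipartiteBelow r b) : ℝ))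
    (c := #A' / (4 * K)) (by positivity)
  have hle : ∑ b ∈ B with (#A' : ℝ) / (4 * K) ≤ #(A'.bipartiteBelow r b),
      (#(A'.bipartiteBelow r b) : ℝ) ≤
        #{b ∈ B | (#A' : ℝ) / (4 * K) ≤ #(A'.bipartiteBelow r b)} * #A' := by
    simpa using sum_le_card_nsmul _ _ (#A' : ℝ) fun b _ => by
      exact_mod_cast card_le_card (filter_subset _ _)
  have key : (#B : ℝ) * #A' / (4 * K) ≤
      #{b ∈ B | (#A' : ℝ) / (4 * K) ≤ #(A'.bipartiteBelow r b)} * #A' := by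
    have h2 : (#A' : ℝ) * (#B / (2 * K)) - #B * (#A' / (4 * K)) = #B * #A' / (4 * K) := by
      field_simp; ring
    linarith
  rw [div_le_iff₀ (by positivity)] at key
  nlinarith

lemma card_mul_le_card_paths3 {Q : Finset α} (hQA : Q ⊆ A) {a : α} {b : β} {δ : ℝ}
    (hQ : ∀ a₁ ∈ Q, r a₁ b ∧ δ ≤ codegree B r a a₁) : #Q * δ ≤ #(paths3 A B r a b) := by
  have hcount : #{p ∈ Q ×ˢ B | r a p.2 ∧ r p.1 p.2} = ∑ a₁ ∈ Q, codegree B r a a₁ := by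
    simp only [card_filter, sum_product, codegree]
  have hsub : {p ∈ Q ×ˢ B | r a p.2 ∧ r p.1 p.2} ⊆ paths3 A B r a b := by
    intro p hp
    simp only [paths3, mem_filter, mem_product] at hp ⊢
    exact ⟨⟨hQA hp.1.1, hp.1.2⟩, hp.2.1, hp.2.2, (hQ p.1 hp.1.1).1⟩
  calc #Q * δ ≤ ∑ a₁ ∈ Q, (codegree B r a a₁ : ℝ) := by
        simpa using card_nsmul_le_sum Q _ δ fun a₁ h => (hQ a₁ h).2
    _ = #{p ∈ Q ×ˢ B | r a p.2 ∧ r p.1 p.2} := by exact_mod_cast hcount.symm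
    _ ≤ #(paths3 A B r a b) := by exact_mod_cast card_le_card hsub

theorem exists_subsets_forall_card_paths3_ge {K : ℝ} (hK : 0 < K)
    (h : (#A * #B : ℝ) < K * #{p ∈ A ×ˢ B | r p.1 p.2}) :
    ∃ A' ⊆ A, ∃ B' ⊆ B, (#A : ℝ) ≤ 6 * K * #A' ∧ (#B : ℝ) ≤ 4 * K * #B' ∧
      ∀ a ∈ A', ∀ b ∈ B', (#A * #B : ℝ) ≤ 12288 * K ^ 5 * #(paths3 A B r a b) := by
  rw [card_filter_product_eq_sum_card_bipartiteAbove] at h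
  obtain ⟨b₀, -, hU, hbad⟩ := exists_large_nbhd_few_bad_pairs A B r hK (by exact_mod_cast h)
  set U := (popular A B r K).bipartiteBelow r b₀
  set bad : α → α → Prop := fun a a' => (codegree B r a a' : ℝ) < #B / (256 * K ^ 3)
  set A' := {a ∈ U | 16 * K * #{a' ∈ U | bad a a'} ≤ (#U : ℝ)}
  set B' := {b ∈ B | (#A' : ℝ) / (4 * K) ≤ #(A'.bipartiteBelow r b)}
  have hUA' : (#U : ℝ) ≤ 2 * #A' :=
    card_le_two_mul_card_filter_few_partners U bad (by positivity) (by linarith)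
  have hA'U : A' ⊆ U := filter_subset _ _
  have hUpop : U ⊆ popular A B r K := filter_subset _ _
  have hpopA : popular A B r K ⊆ A := filter_subset _ _
  have hA' : A'.Nonempty := by
    have hA : A.Nonempty := by
      rw [nonempty_iff_ne_empty]
      rintro rfl
      simp at h
    rw [← card_pos, ← Nat.cast_pos (α := ℝ)]
    nlinarith [Nat.cast_pos (α := ℝ).mpr hA.card_pos]
  have hB' : (#B : ℝ) ≤ 4 * K * #B' :=
    card_le_four_mul_card_filter_rich B r hK A' hA' fun a ha => (mem_filter.mp (hUpop (hA'U ha))).2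
  refine ⟨A', hA'U.trans (hUpop.trans hpopA), B', filter_subset _ _, by nlinarith, hB',
    fun a ha b hb => ?_⟩
  set Q := {a₁ ∈ A'.bipartiteBelow r b | ¬bad a a₁}
  have hQ : (#U : ℝ) ≤ 2 * (8 * K) * #Q := by
    refine card_le_two_mul_mul_card_filter_not_of_subset (N := A'.bipartiteBelow r b)
      ((filter_subset _ _).trans hA'U) (bad a) (by positivity)
      (by linarith [(mem_filter.mp ha).2]) ?_
    have hb' := (mem_filter.mp hb).2
    rw [div_le_iff₀ (by positivity)] at hb'
    linarith
  have hpaths := card_mul_le_card_paths3 A B r (δ := #B / (256 * K ^ 3))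
    (fun x hx => hpopA (hUpop (hA'U (filter_subset _ _ (filter_subset _ _ hx))))) (Q := Q)
    fun a₁ ha₁ => by
      obtain ⟨hmem, hgood⟩ := mem_filter.mp ha₁
      exact ⟨((mem_bipartiteBelow r).mp hmem).2, not_lt.mp hgood⟩
  calc (#A * #B : ℝ) ≤ 48 * K ^ 2 * #Q * #B := by gcongr; nlinarith
    _ = 12288 * K ^ 5 * (#Q * (#B / (256 * K ^ 3))) := by field_simp; ring
    _ ≤ 12288 * K ^ 5 * #(paths3 A B r a b) := by gcongr

end Graph

section Additive

variable {Z : Type*} [AddCommGroup Z] [DecidableEq Z]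

lemma card_paths3_le_card_filter_sub_add_eq (A B : Finset Z) {G : Finset (Z × Z)} {S : Finset Z}
    (hS : ∀ p ∈ G, p.1 + p.2 ∈ S) (a b : Z) :
    #(paths3 A B (fun x y => (x, y) ∈ G) a b) ≤
      #{u ∈ S ×ˢ S ×ˢ S | u.1 - u.2.1 + u.2.2 = a + b} := by
  refine card_le_card_of_injOn (fun p => (a + p.2, p.1 + p.2, p.1 + b)) (fun p hp => ?_) ?_
  · obtain ⟨-, h₁, h₂, h₃⟩ := mem_filter.mp hp
    simp only [coe_filter, Set.mem_ofPred_eq, mem_product]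
    exact ⟨⟨hS _ h₁, hS _ h₂, hS _ h₃⟩, by abel⟩
  · intro p _ p' _ hpp'
    simp only [Prod.mk.injEq] at hpp'
    exact Prod.ext (add_right_cancel hpp'.2.2) (add_left_cancel hpp'.1)

lemma card_add_mul_le_card_pow_three (A B : Finset Z) {G : Finset (Z × Z)} {S : Finset Z}
    (hS : ∀ p ∈ G, p.1 + p.2 ∈ S) (A' B' : Finset Z) {M : ℝ}
    (h : ∀ a ∈ A', ∀ b ∈ B', M ≤ #(paths3 A B (fun x y => (x, y) ∈ G) a b)) :
    #(A' + B') * M ≤ #S ^ 3 := by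
  have hfibres :=
    sum_card_fiberwise_eq_card_filter (S ×ˢ S ×ˢ S) (A' + B') fun u => u.1 - u.2.1 + u.2.2
  have hrepr : ∀ s ∈ A' + B', M ≤ #{u ∈ S ×ˢ S ×ˢ S | u.1 - u.2.1 + u.2.2 = s} := by
    intro s hs
    obtain ⟨a, ha, b, hb, rfl⟩ := mem_add.mp hs
    exact (h a ha b hb).trans (by exact_mod_cast card_paths3_le_card_filter_sub_add_eq A B hS a b)
  calc #(A' + B') * M
      ≤ ∑ s ∈ A' + B', (#{u ∈ S ×ˢ S ×ˢ S | u.1 - u.2.1 + u.2.2 = s} : ℝ) := by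
        simpa using card_nsmul_le_sum _ _ M hrepr
    _ ≤ #(S ×ˢ S ×ˢ S) := by exact_mod_cast hfibres ▸ card_filter_le _ _
    _ = #S ^ 3 := by simp only [card_product]; push_cast; ring

end Additive

end BalogSzemerediGowers

open BalogSzemerediGowers

/-- Balog–Szemerédi–Gowers theorem. -/
theorem stmt_7 : ∃ (c Cc : ℝ) (n : ℕ), 0 < c ∧ 0 < Cc ∧
    ∀ (Z : Type) [AddCommGroup Z] [DecidableEq Z]
      (A B : Finset Z) (G : Finset (Z × Z)) (K : ℝ),
      G ⊆ A ×ˢ B → 1 < K →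
      (A.card : ℝ) * B.card / K < G.card →
      ((G.image fun p => p.1 + p.2).card : ℝ) ≤
        K * Real.sqrt ((A.card : ℝ) * B.card) →
      ∃ A' ⊆ A, ∃ B' ⊆ B,
        c * A.card / K ≤ (A'.card : ℝ) ∧
        c * B.card / K ≤ (B'.card : ℝ) ∧
        ((A' + B').card : ℝ) ≤ Cc * K ^ n * Real.sqrt ((A.card : ℝ) * B.card) := by
  refine ⟨1 / 6, 12288, 8, by norm_num, by norm_num, fun Z _ _ A B G K hGAB hK hG hS => ?_⟩
  have hK0 : 0 < K := one_pos.trans hK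
  have hAB : (0 : ℝ) < #A * #B := by
    have hGle : (#G : ℝ) ≤ #A * #B := by exact_mod_cast card_product A B ▸ card_le_card hGAB
    have := div_nonneg (by positivity : (0 : ℝ) ≤ #A * #B) hK0.le
    linarith
  have hedges : {p ∈ A ×ˢ B | (p.1, p.2) ∈ G} = G := by
    simpa using filter_mem_eq_inter.trans (inter_eq_right.mpr hGAB)
  obtain ⟨A', hA', B', hB', hA'card, hB'card, hpaths⟩ :=
    exists_subsets_forall_card_paths3_ge A B (fun x y => (x, y) ∈ G) hK0
      (by rw [hedges]; rw [div_lt_iff₀ hK0] at hG; linarith)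
  refine ⟨A', hA', B', hB', by rw [div_le_iff₀ hK0]; linarith,
    by rw [div_le_iff₀ hK0]; linarith, ?_⟩
  have hcount := card_add_mul_le_card_pow_three A B (fun p hp => mem_image_of_mem _ hp) A' B'
    (M := #A * #B / (12288 * K ^ 5)) fun a ha b hb => by
      rw [div_le_iff₀' (by positivity)]
      exact hpaths a ha b hb
  rw [← mul_div_assoc, div_le_iff₀ (by positivity)] at hcount
  refine le_of_mul_le_mul_right ?_ hAB
  calc (#(A' + B') : ℝ) * (#A * #B) ≤ #(G.image fun p => p.1 + p.2) ^ 3 * (12288 * K ^ 5) := hcount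
    _ ≤ (K * √(#A * #B)) ^ 3 * (12288 * K ^ 5) := by gcongr
    _ = 12288 * K ^ 8 * √(#A * #B) * √(#A * #B) ^ 2 := by ring
    _ = 12288 * K ^ 8 * √(#A * #B) * (#A * #B) := by rw [Real.sq_sqrt hAB.le]
end

section
/- Let 0 < δ ≪ 1 be dyadic, 0 < σ < 1, K ≫ 1, ε > 0, and let A ⊆ [0,1] be a union of δ-intervals with |A| ≤ δ^{1−σ−ε}. For each dyadic δ < δ' ≤ 1 define A_{δ'} = {x ∈ ℝ : |A ∩ B(x, δ')| ≥ δ^{−Kε}·δ·(δ'/δ)^σ}, and let A* be the δ-neighborhood of A \ ⋃_{δ<δ'≤1} A_{δ'}. Then A ⊆ A* ∪ ⋃_{δ<δ'≤1} A_{δ'}, each A_{δ'} can be covered by ≲ δ^{Kε−Cε}·(δ')^{−σ} intervals of length δ', and A* satisfies |A* ∩ B(x, r)| ≲ δ^{−Kε−Cε}·δ·(r/δ)^σ for all x and δ < r < 1. -/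
/-!
The covering `A ⊆ A* ∪ ⋃ A_{δ'}` holds by construction. Each `A_{δ'}` is covered by the grid
intervals of length `δ'` meeting it; choosing a point of `A_{δ'}` in each such cell, the balls of
radius `δ'` around points in cells at least three apart are disjoint, and each carries mass
`≥ δ^{-Kε} δ (δ'/δ)^σ` of `A`, so the number of cells is at most `3|A|` over that threshold.

A point of `A* ∩ B(x, r)`, if any, is `2δ`-close to some `z ∈ A` lying in no `A_{δ'}`.
Since `A` is a union of `δ`-intervals, `δ`-thickening at most triples its measure locally:
`|A* ∩ B(x, r)| ≤ 3|A ∩ B(x, r + δ)|`, and `A ∩ B(x, r + δ)` lies in `B(z, δ')` for a dyadic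
`δ' ≤ 10r`, where the mass of `A` is below the threshold because `z ∉ A_{δ'}`.
-/

open MeasureTheory Metric

section

open Set

theorem card_mul_le_measureReal_of_pairwiseDisjoint {α ι : Type*} [MeasurableSpace α]
    {μ : Measure α} {A : Set α} {t : ℝ} (hA : μ A ≠ ⊤) {T : Finset ι} {E : ι → Set α}
    (hdisj : (T : Set ι).PairwiseDisjoint E) (hE : ∀ i ∈ T, MeasurableSet (E i))
    (hEA : ∀ i ∈ T, E i ⊆ A) (ht : ∀ i ∈ T, t ≤ μ.real (E i)) :
    T.card * t ≤ μ.real A :=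
  calc T.card * t = ∑ _i ∈ T, t := by simp
    _ ≤ ∑ i ∈ T, μ.real (E i) := Finset.sum_le_sum ht
    _ = μ.real (⋃ i ∈ T, E i) :=
      (measureReal_biUnion_finset hdisj hE fun i hi => measure_ne_top_of_subset (hEA i hi) hA).symm
    _ ≤ μ.real A := measureReal_mono (iUnion₂_subset hEA) hA

theorem card_mul_le_mul_measureReal_of_modEq {α : Type*} [MeasurableSpace α]
    {μ : Measure α} {A : Set α} {t : ℝ} {k : ℕ} (hk : 0 < k) (hA : μ A ≠ ⊤) {T : Finset ℤ}
    {E : ℤ → Set α}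
    (hdisj : ∀ a ∈ T, ∀ b ∈ T, a ≠ b → a ≡ b [ZMOD k] → Disjoint (E a) (E b))
    (hE : ∀ n ∈ T, MeasurableSet (E n)) (hEA : ∀ n ∈ T, E n ⊆ A)
    (ht : ∀ n ∈ T, t ≤ μ.real (E n)) :
    T.card * t ≤ k * μ.real A := by
  classical
  have hk' : (0 : ℤ) < k := by exact_mod_cast hk
  have hfiber (c : ℤ) : ({n ∈ T | n % k = c}.card : ℝ) * t ≤ μ.real A := by
    refine card_mul_le_measureReal_of_pairwiseDisjoint hA ?_
      (fun n hn => hE n (Finset.mem_filter.1 hn).1) (fun n hn => hEA n (Finset.mem_filter.1 hn).1)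
      (fun n hn => ht n (Finset.mem_filter.1 hn).1)
    intro a ha b hb hab
    rw [Finset.mem_coe, Finset.mem_filter] at ha hb
    exact hdisj a ha.1 b hb.1 hab (ha.2.trans hb.2.symm)
  have hmaps : MapsTo (· % (k : ℤ)) T (Finset.Ico 0 (k : ℤ)) := fun n _ => by
    simpa using ⟨Int.emod_nonneg n hk'.ne', Int.emod_lt_of_pos n hk'⟩
  calc T.card * t = ∑ c ∈ Finset.Ico 0 (k : ℤ), ({n ∈ T | n % k = c}.card : ℝ) * t := by
        rw [Finset.card_eq_sum_card_fiberwise hmaps, Nat.cast_sum, Finset.sum_mul]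
    _ ≤ ∑ _c ∈ Finset.Ico 0 (k : ℤ), μ.real A := Finset.sum_le_sum fun c _ => hfiber c
    _ = k * μ.real A := by simp

theorem exists_finset_subset_iUnion_Ico {X : Set ℝ} {a b d : ℝ} (hX : X ⊆ Icc a b)
    (hd : 0 < d) : ∃ T : Finset ℤ, X ⊆ ⋃ n ∈ T, Ico (n * d) (n * d + d) ∧
      ∀ n ∈ T, (X ∩ Ico (n * d) (n * d + d)).Nonempty := by
  classical
  refine ⟨{n ∈ Finset.Icc ⌊a / d⌋ ⌊b / d⌋ | (X ∩ Ico (n * d) (n * d + d)).Nonempty},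
    fun y hy => ?_, fun n hn => (Finset.mem_filter.1 hn).2⟩
  have hcell : y ∈ Ico (⌊y / d⌋ * d) (⌊y / d⌋ * d + d) := by
    have := Int.lt_floor_add_one (y / d)
    constructor
    · exact (le_div_iff₀ hd).1 (Int.floor_le _)
    · rw [div_lt_iff₀ hd] at this; linarith
  refine mem_biUnion (Finset.mem_filter.2 ⟨Finset.mem_Icc.2 ⟨?_, ?_⟩, y, hy, hcell⟩) hcell
  · exact Int.floor_mono (div_le_div_of_nonneg_right (hX hy).1 hd.le)
  · exact Int.floor_mono (div_le_div_of_nonneg_right (hX hy).2 hd.le)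

theorem exists_finset_cover_setOf_le_volume_inter_closedBall {A : Set ℝ} {a b d t : ℝ}
    (hAm : MeasurableSet A) (hA : A ⊆ Icc a b) (hd : 0 < d) (ht : 0 < t) :
    ∃ S : Finset ℝ, {x | t ≤ (volume (A ∩ closedBall x d)).toReal} ⊆ ⋃ x ∈ S, Icc x (x + d) ∧
      S.card * t ≤ 3 * (volume A).toReal := by
  classical
  set X := {x | t ≤ (volume (A ∩ closedBall x d)).toReal}
  have hX : X ⊆ Icc (a - d) (b + d) := by
    intro x hx
    obtain ⟨w, hwA, hwx⟩ : (A ∩ closedBall x d).Nonempty := by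
      by_contra h
      rw [not_nonempty_iff_eq_empty] at h
      have : t ≤ 0 := by simpa [X, h] using hx
      linarith
    rw [mem_closedBall, Real.dist_eq, abs_le] at hwx
    constructor <;> linarith [(hA hwA).1, (hA hwA).2]
  obtain ⟨T, hcover, hT⟩ := exists_finset_subset_iUnion_Ico hX hd
  choose! c hcX hcI using hT
  have hball (n : ℤ) (hn : n ∈ T) : closedBall (c n) d ⊆ Ico ((n - 1) * d) ((n + 2) * d) := by
    intro w hw
    rw [mem_closedBall, Real.dist_eq, abs_le] at hw
    have := hcI n hn
    constructor <;> nlinarith [this.1, this.2]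
  refine ⟨T.image fun n : ℤ => (n : ℝ) * d, ?_, ?_⟩
  · rw [Finset.set_biUnion_finset_image]
    exact hcover.trans (iUnion₂_mono fun n _ => Ico_subset_Icc_self)
  have hcount : T.card * t ≤ (3 : ℕ) * (volume A).toReal := by
    refine card_mul_le_mul_measureReal_of_modEq (E := fun n => A ∩ closedBall (c n) d)
      three_pos (measure_ne_top_of_subset hA measure_Icc_lt_top.ne) ?_
      (fun n _ => hAm.inter measurableSet_closedBall) (fun n _ => inter_subset_left)
      (fun n hn => hcX n hn)
    intro p hp q hq hpq hmod
    refine Disjoint.mono (inter_subset_right.trans (hball p hp))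
      (inter_subset_right.trans (hball q hq)) ?_
    have hsep : p + 3 ≤ q ∨ q + 3 ≤ p := by
      simp only [Int.ModEq, Nat.cast_ofNat] at hmod; omega
    rw [Ico_disjoint_Ico]
    rcases hsep with h | h
    · have : (p : ℝ) + 3 ≤ q := by exact_mod_cast h
      exact (min_le_left _ _).trans (le_trans (by nlinarith) (le_max_right _ _))
    · have : (q : ℝ) + 3 ≤ p := by exact_mod_cast h
      exact (min_le_right _ _).trans (le_trans (by nlinarith) (le_max_left _ _))
  calc ((T.image fun n : ℤ => (n : ℝ) * d).card : ℝ) * t ≤ T.card * t := by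
        gcongr; exact_mod_cast Finset.card_image_le
    _ ≤ 3 * (volume A).toReal := by exact_mod_cast hcount

theorem cthickening_biUnion_Icc_subset {S : Finset ℝ} {δ : ℝ} (hδ : 0 ≤ δ) :
    cthickening δ (⋃ x ∈ S, Icc x (x + δ)) ⊆
      (· + δ) ⁻¹' (⋃ x ∈ S, Icc x (x + δ)) ∪ (⋃ x ∈ S, Icc x (x + δ)) ∪
        (· + -δ) ⁻¹' (⋃ x ∈ S, Icc x (x + δ)) := by
  rw [(S.isCompact_biUnion fun _ _ => isCompact_Icc).cthickening_eq_biUnion_closedBall hδ]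
  simp only [mem_iUnion, iUnion_subset_iff]
  intro a ⟨x, hx, hax⟩ y hya
  rw [mem_closedBall, Real.dist_eq, abs_le] at hya
  have hcell {w : ℝ} (h₁ : x ≤ w) (h₂ : w ≤ x + δ) : w ∈ ⋃ x ∈ S, Icc x (x + δ) :=
    mem_biUnion hx ⟨h₁, h₂⟩
  rcases lt_or_ge y x with h₁ | h₁
  · exact Or.inl (Or.inl (hcell (by linarith [hax.1]) (by linarith)))
  rcases le_or_gt y (x + δ) with h₂ | h₂
  · exact Or.inl (Or.inr (hcell h₁ h₂))
  · exact Or.inr (hcell (by linarith) (by linarith [hax.2]))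

theorem volume_cthickening_inter_closedBall_le {A : Set ℝ} {S : Finset ℝ} {δ : ℝ} (hδ : 0 ≤ δ)
    (hA : A = ⋃ x ∈ S, Icc x (x + δ)) (x r : ℝ) :
    volume (cthickening δ A ∩ closedBall x r) ≤ 3 * volume (A ∩ closedBall x (r + δ)) := by
  set B := A ∩ closedBall x (r + δ)
  have hnear {w c : ℝ} (hw : w ∈ closedBall x r) (hc : |c| ≤ δ) (hwc : w + c ∈ A) : w + c ∈ B := by
    refine ⟨hwc, ?_⟩
    rw [mem_closedBall, Real.dist_eq] at hw ⊢
    calc |w + c - x| ≤ |w - x| + |c| := by rw [add_sub_right_comm]; exact abs_add_le _ _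
      _ ≤ r + δ := add_le_add hw hc
  have hsub : cthickening δ A ∩ closedBall x r ⊆ (· + δ) ⁻¹' B ∪ B ∪ (· + -δ) ⁻¹' B := by
    rintro w ⟨hwA, hwx⟩
    subst hA
    rcases cthickening_biUnion_Icc_subset hδ hwA with (h | h) | h
    · exact Or.inl (Or.inl (hnear hwx (by rw [abs_of_nonneg hδ]) h))
    · exact Or.inl (Or.inr ⟨h, closedBall_subset_closedBall (by linarith) hwx⟩)
    · exact Or.inr (hnear hwx (by rw [abs_neg, abs_of_nonneg hδ]) h)
  calc volume (cthickening δ A ∩ closedBall x r)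
      ≤ volume ((· + δ) ⁻¹' B ∪ B ∪ (· + -δ) ⁻¹' B) := measure_mono hsub
    _ ≤ volume ((· + δ) ⁻¹' B) + volume B + volume ((· + -δ) ⁻¹' B) :=
      (measure_union_le _ _).trans (add_le_add_left (measure_union_le _ _) _)
    _ = 3 * volume B := by
      rw [measure_preimage_add_right, measure_preimage_add_right]; ring

theorem exists_two_rpow_neg_mem_Ico {s : ℝ} (h₀ : 0 < s) (h₁ : s ≤ 1) :
    ∃ k : ℕ, s ≤ (2 : ℝ) ^ (-(k : ℝ)) ∧ (2 : ℝ) ^ (-(k : ℝ)) < 2 * s := by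
  obtain ⟨k, hk₁, hk₂⟩ := exists_nat_pow_near ((one_le_inv₀ h₀).2 h₁) one_lt_two
  refine ⟨k, ?_, ?_⟩ <;> rw [Real.rpow_neg zero_le_two, Real.rpow_natCast]
  · exact (le_inv_comm₀ h₀ (by positivity)).2 hk₁
  · calc ((2 : ℝ) ^ k)⁻¹ = 2 * ((2 : ℝ) ^ (k + 1))⁻¹ := by rw [pow_succ]; field_simp
      _ < 2 * s := by gcongr; exact (inv_lt_comm₀ (by positivity) h₀).2 hk₂

theorem exists_lt_two_rpow_neg_mem_Icc {m : ℕ} (hm : 0 < m) {s : ℝ}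
    (hs : (2 : ℝ) ^ (-(m : ℝ)) < s) :
    ∃ k < m, (2 : ℝ) ^ (-(k : ℝ)) ∈ Icc (min s 1) (2 * s) := by
  rcases le_or_gt s 1 with hs₁ | hs₁
  · obtain ⟨k, hk₁, hk₂⟩ :=
      exists_two_rpow_neg_mem_Ico ((Real.rpow_pos_of_pos two_pos _).trans hs) hs₁
    refine ⟨k, ?_, (min_le_left _ _).trans hk₁, hk₂.le⟩
    have : -(m : ℝ) < -(k : ℝ) :=
      (Real.rpow_lt_rpow_left_iff one_lt_two).1 (hs.trans_le hk₁)
    exact_mod_cast neg_lt_neg_iff.1 this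
  · exact ⟨0, hm, by simp, by simp; linarith⟩

theorem exists_cover_setOf_le_volume_inter_closedBall_of_volume_le {A : Set ℝ} {a b : ℝ}
    (hAm : MeasurableSet A) (hA : A ⊆ Icc a b) {δ δ' σ K ε : ℝ} (hδ₀ : 0 < δ) (hδ₁ : δ ≤ 1)
    (hδ' : 0 < δ') (hε : 0 ≤ ε) (hvol : (volume A).toReal ≤ δ ^ (1 - σ - ε)) :
    ∃ S : Finset ℝ,
      {x | δ ^ (-(K * ε)) * δ * (δ' / δ) ^ σ ≤ (volume (A ∩ closedBall x δ')).toReal} ⊆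
        ⋃ x ∈ S, Icc x (x + δ') ∧
      (S.card : ℝ) ≤ 30 * δ ^ (K * ε - 30 * ε) * δ' ^ (-σ) := by
  set t := δ ^ (-(K * ε)) * δ * (δ' / δ) ^ σ
  have ht : 0 < t := by positivity
  have hsplit : δ ^ (1 - σ - ε) = t * (δ ^ (K * ε - ε) * δ' ^ (-σ)) := by
    simp only [t, Real.rpow_sub hδ₀, Real.rpow_neg hδ₀.le, Real.rpow_neg hδ'.le,
      Real.div_rpow hδ'.le hδ₀.le, Real.rpow_one]
    field_simp
  obtain ⟨S, hcover, hcard⟩ := exists_finset_cover_setOf_le_volume_inter_closedBall hAm hA hδ' ht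
  refine ⟨S, hcover, ?_⟩
  have hcard' : (S.card : ℝ) ≤ 3 * δ ^ (K * ε - ε) * δ' ^ (-σ) := by
    rw [← mul_le_mul_iff_left₀ ht]
    nlinarith
  calc (S.card : ℝ) ≤ 3 * δ ^ (K * ε - ε) * δ' ^ (-σ) := hcard'
    _ ≤ 30 * δ ^ (K * ε - 30 * ε) * δ' ^ (-σ) := by
      have hexp := Real.rpow_le_rpow_of_exponent_ge hδ₀ hδ₁
        (by linarith : K * ε - 30 * ε ≤ K * ε - ε)
      gcongr ?_ * _
      exact mul_le_mul (by norm_num) hexp (by positivity) (by norm_num)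

theorem volume_cthickening_inter_closedBall_le_of_forall_lt {A E : Set ℝ} {S : Finset ℝ} {m : ℕ}
    (hm : 0 < m) {δ σ K ε : ℝ} (hδ : δ = (2 : ℝ) ^ (-(m : ℝ))) (hσ₀ : 0 < σ) (hσ₁ : σ < 1)
    (hε : 0 ≤ ε) (hA : A = ⋃ x ∈ S, Icc x (x + δ)) (hA01 : A ⊆ Icc 0 1) (hEA : E ⊆ A)
    (hE : ∀ z ∈ E, ∀ k < m, (volume (A ∩ closedBall z ((2 : ℝ) ^ (-(k : ℝ))))).toReal <
      δ ^ (-(K * ε)) * δ * ((2 : ℝ) ^ (-(k : ℝ)) / δ) ^ σ)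
    {x r : ℝ} (hr : δ < r) :
    (volume (cthickening δ E ∩ closedBall x r)).toReal ≤
      30 * δ ^ (-(K * ε) - 30 * ε) * δ * (r / δ) ^ σ := by
  have hδ₀ : 0 < δ := hδ ▸ Real.rpow_pos_of_pos two_pos _
  have hδ₁ : δ ≤ 1 := hδ ▸ Real.rpow_le_one_of_one_le_of_nonpos one_le_two (by simp)
  have hr₀ : 0 < r := hδ₀.trans hr
  rcases (cthickening δ E ∩ closedBall x r).eq_empty_or_nonempty with h | ⟨y, hyE, hyx⟩
  · rw [h, measure_empty, ENNReal.toReal_zero]; positivity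
  obtain ⟨z, hzE, hyz⟩ := mem_thickening_iff.1
    (cthickening_subset_thickening' (by linarith) (by linarith : δ < 2 * δ) E hyE)
  obtain ⟨k, hkm, hk₁, hk₂⟩ :=
    exists_lt_two_rpow_neg_mem_Icc hm (s := 5 * r) (by rw [← hδ]; linarith)
  set δ' := (2 : ℝ) ^ (-(k : ℝ))
  have hball : A ∩ closedBall x (r + δ) ⊆ A ∩ closedBall z δ' := by
    refine fun w ⟨hwA, hwx⟩ => ⟨hwA, mem_closedBall.2 (le_trans (le_min ?_ ?_) hk₁)⟩
    · rw [mem_closedBall] at hwx hyx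
      linarith [dist_triangle4 w x y z, dist_comm x y]
    · exact Real.dist_le_of_mem_Icc_01 (hA01 hwA) (hA01 (hEA hzE))
  have hlocal : volume (cthickening δ E ∩ closedBall x r) ≤ 3 * volume (A ∩ closedBall z δ') :=
    calc volume (cthickening δ E ∩ closedBall x r)
        ≤ volume (cthickening δ A ∩ closedBall x r) :=
          measure_mono (inter_subset_inter_left _ (cthickening_subset_of_subset δ hEA))
      _ ≤ 3 * volume (A ∩ closedBall x (r + δ)) :=
          volume_cthickening_inter_closedBall_le hδ₀.le hA x r
      _ ≤ 3 * volume (A ∩ closedBall z δ') := mul_le_mul_right (measure_mono hball) 3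
  have hfin : 3 * volume (A ∩ closedBall z δ') ≠ ⊤ :=
    ENNReal.mul_ne_top (by simp)
      (measure_ne_top_of_subset inter_subset_right measure_closedBall_lt_top.ne)
  calc (volume (cthickening δ E ∩ closedBall x r)).toReal
      ≤ 3 * (volume (A ∩ closedBall z δ')).toReal := by
        simpa [ENNReal.toReal_mul] using ENNReal.toReal_mono hfin hlocal
    _ ≤ 3 * (δ ^ (-(K * ε)) * δ * (δ' / δ) ^ σ) := by gcongr; exact (hE z hzE k hkm).le
    _ ≤ 3 * (δ ^ (-(K * ε)) * δ * (10 * (r / δ)) ^ σ) := by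
        gcongr; rw [mul_div_assoc']; gcongr; linarith
    _ = 3 * 10 ^ σ * δ ^ (-(K * ε)) * (δ * (r / δ) ^ σ) := by
        rw [Real.mul_rpow (by norm_num) (by positivity)]; ring
    _ ≤ 30 * δ ^ (-(K * ε) - 30 * ε) * (δ * (r / δ) ^ σ) := by
        have hexp := Real.rpow_le_rpow_of_exponent_ge hδ₀ hδ₁
          (by linarith : -(K * ε) - 30 * ε ≤ -(K * ε))
        have h10 : (10 : ℝ) ^ σ ≤ 10 := Real.rpow_le_self_of_one_le (by norm_num) hσ₁.le
        gcongr ?_ * _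
        exact mul_le_mul (by linarith) hexp (by positivity) (by norm_num)
    _ = 30 * δ ^ (-(K * ε) - 30 * ε) * δ * (r / δ) ^ σ := by ring

end

/-- Katz–Tao refinement lemma. With `δ = 2^{-m}` and dyadic scales `δ' = 2^{-j}`,
`δ < δ' ≤ 1` (i.e. `j < m`), a union `A` of `δ`-intervals of measure `≤ δ^{1-σ-ε}`
decomposes as `A ⊆ A* ∪ ⋃ A_{δ'}`, each `A_{δ'}` is covered by
`≲ δ^{Kε-Cε}(δ')^{-σ}` intervals of length `δ'`, and `A*` is a `(δ,σ)`-set up to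
`δ^{-Kε-Cε}` losses. -/
theorem stmt_8 : ∃ C0 : ℝ, 0 < C0 ∧
    ∀ (m : ℕ) (σ K ε : ℝ), 0 < m → 0 < σ → σ < 1 → 1 ≤ K → 0 < ε →
    ∀ A : Set ℝ, MeasurableSet A → A ⊆ Set.Icc 0 1 →
    (∃ S : Finset ℝ, A = ⋃ x ∈ S, Set.Icc x (x + (2 : ℝ) ^ (-(m : ℝ)))) →
    (volume A).toReal ≤ ((2 : ℝ) ^ (-(m : ℝ))) ^ (1 - σ - ε) →
    (let δ : ℝ := (2 : ℝ) ^ (-(m : ℝ))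
     let Ad : ℝ → Set ℝ := fun δ' =>
       {x : ℝ | δ ^ (-(K * ε)) * δ * (δ' / δ) ^ σ ≤
          (volume (A ∩ closedBall x δ')).toReal}
     let Astar : Set ℝ :=
       cthickening δ (A \ ⋃ j ∈ Finset.range m, Ad ((2 : ℝ) ^ (-(j : ℝ))))
     (A ⊆ Astar ∪ ⋃ j ∈ Finset.range m, Ad ((2 : ℝ) ^ (-(j : ℝ)))) ∧
     (∀ j ∈ Finset.range m, ∃ S : Finset ℝ,
        Ad ((2 : ℝ) ^ (-(j : ℝ))) ⊆
          ⋃ x ∈ S, Set.Icc x (x + (2 : ℝ) ^ (-(j : ℝ))) ∧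
        (S.card : ℝ) ≤ C0 * δ ^ (K * ε - C0 * ε) * ((2 : ℝ) ^ (-(j : ℝ))) ^ (-σ)) ∧
     (∀ x r : ℝ, δ < r → r < 1 →
        (volume (Astar ∩ closedBall x r)).toReal ≤
          C0 * δ ^ (-(K * ε) - C0 * ε) * δ * (r / δ) ^ σ)) := by
  refine ⟨30, by norm_num, ?_⟩
  rintro m σ K ε hm hσ₀ hσ₁ - hε A hAm hA01 ⟨S, hA⟩ hvol δ Ad Astar
  have hδ₀ : 0 < δ := Real.rpow_pos_of_pos two_pos _
  have hδ₁ : δ ≤ 1 := Real.rpow_le_one_of_one_le_of_nonpos one_le_two (by simp)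
  refine ⟨fun a ha => ?_, fun j _ => ?_, fun x r hr _ => ?_⟩
  · by_cases h : a ∈ ⋃ j ∈ Finset.range m, Ad ((2 : ℝ) ^ (-(j : ℝ)))
    · exact Or.inr h
    · exact Or.inl (self_subset_cthickening _ ⟨ha, h⟩)
  · exact exists_cover_setOf_le_volume_inter_closedBall_of_volume_le hAm hA01 hδ₀ hδ₁
      (Real.rpow_pos_of_pos two_pos _) hε.le hvol
  · refine volume_cthickening_inter_closedBall_le_of_forall_lt hm rfl hσ₀ hσ₁ hε.le hA hA01
      Set.sdiff_subset (fun z hz k hk => ?_) hr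
    exact not_le.1 fun h => hz.2 (Set.mem_biUnion (Finset.mem_range.2 hk) h)
end

section
/- Let p₁ = (0,0) and p₂ ∈ ℝ² with |p₂| ≥ δ^{ρ/n} and dist(l_{p₁,p₂}, y) > δ^{ρ/n} for a point y ∈ ℝ². Then the lines l_{p₁, y} and l_{p₂, y} make an angle at least c·δ^{2ρ/n} for some constant c > 0 depending only on the diameter of the configuration (assumed bounded by an absolute constant). -/
/-!
Twice the area of the triangle `0, p₂, y` is `‖p₂‖ · dist(y, l_{0,p₂})`, and also
`‖y‖ · ‖y - p₂‖ · sin θ`, where `θ` is the angle at `y` (both are the square root of the same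
Gram determinant). The first product is at least `δ^{2ρ/n}` and the two sides `‖y‖, ‖y - p₂‖`
are at most `10` and `20`, so `sin θ ≥ δ^{2ρ/n} / 200`; finally `sin θ ≤ min θ (π - θ)`.
-/

open Metric InnerProductGeometry Real RealInnerProductSpace

section Gram

variable {V : Type*} [NormedAddCommGroup V] [InnerProductSpace ℝ V]

theorem gram_sub_right (y p : V) :
    ‖y‖ ^ 2 * ‖y - p‖ ^ 2 - ⟪y, y - p⟫ ^ 2 = ‖y‖ ^ 2 * ‖p‖ ^ 2 - ⟪y, p⟫ ^ 2 := by
  rw [norm_sub_sq_real, inner_sub_right, real_inner_self_eq_norm_sq]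
  ring

theorem sq_norm_mul_norm_sub_smul_proj (y p : V) (hp : p ≠ 0) :
    (‖p‖ * ‖y - (⟪y, p⟫ / ‖p‖ ^ 2) • p‖) ^ 2 = ‖y‖ ^ 2 * ‖p‖ ^ 2 - ⟪y, p⟫ ^ 2 := by
  have hp' : ‖p‖ ≠ 0 := norm_ne_zero_iff.mpr hp
  rw [mul_pow, norm_sub_sq_real, real_inner_smul_right, norm_smul, mul_pow, Real.norm_eq_abs,
    sq_abs]
  field_simp
  ring

theorem norm_mul_infDist_line_le (y p : V) :
    ‖p‖ * infDist y {x | ∃ t : ℝ, x = t • p} ≤ sin (angle y (y - p)) * (‖y‖ * ‖y - p‖) := by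
  rcases eq_or_ne p 0 with rfl | hp
  · rw [norm_zero, zero_mul]
    exact mul_nonneg (sin_angle_nonneg _ _) (by positivity)
  have h_infDist : infDist y {x | ∃ t : ℝ, x = t • p} ≤ ‖y - (⟪y, p⟫ / ‖p‖ ^ 2) • p‖ := by
    rw [← dist_eq_norm]
    exact infDist_le_dist_of_mem ⟨_, rfl⟩
  rw [sin_angle_mul_norm_mul_norm, real_inner_self_eq_norm_sq, real_inner_self_eq_norm_sq,
    ← sq, gram_sub_right, ← sq_norm_mul_norm_sub_smul_proj y p hp, sqrt_sq (by positivity)]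
  gcongr

end Gram

theorem sin_le_min_self_pi_sub {θ : ℝ} (h₀ : 0 ≤ θ) (hπ : θ ≤ π) : sin θ ≤ min θ (π - θ) :=
  le_min (sin_le h₀) (by simpa only [sin_pi_sub] using sin_le (sub_nonneg.mpr hπ))

/-- With `p₁ = 0`, if `|p₂| ≥ δ^{ρ/n}` and `dist(l_{p₁,p₂}, y) > δ^{ρ/n}`, all points
in a fixed bounded region, then the lines `l_{p₁,y}` and `l_{p₂,y}` make an angle at
least `c·δ^{2ρ/n}`. -/
theorem stmt_17 : ∃ c : ℝ, 0 < c ∧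
    ∀ (δ ρ n : ℝ), 0 < δ → δ < 1 → 0 < ρ → 0 < n →
      ∀ p₂ y : EuclideanSpace ℝ (Fin 2),
        p₂ ∈ closedBall 0 10 → y ∈ closedBall 0 10 →
        δ ^ (ρ / n) ≤ ‖p₂‖ →
        δ ^ (ρ / n) < infDist y {x : EuclideanSpace ℝ (Fin 2) | ∃ t : ℝ, x = t • p₂} →
        c * δ ^ (2 * ρ / n) ≤
          min (InnerProductGeometry.angle (y - 0) (y - p₂))
            (Real.pi - InnerProductGeometry.angle (y - 0) (y - p₂)) := by
  refine ⟨1 / 200, by norm_num, fun δ ρ n hδ _ _ _ p₂ y hp₂_mem hy_mem h_norm h_dist => ?_⟩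
  set ε := δ ^ (ρ / n)
  set θ := angle y (y - p₂)
  have hε : 0 ≤ ε := rpow_nonneg hδ.le _
  have hy : ‖y‖ ≤ 10 := mem_closedBall_zero_iff.mp hy_mem
  have hyp₂ : ‖y - p₂‖ ≤ 20 := by
    linarith [norm_sub_le y p₂, mem_closedBall_zero_iff.mp hp₂_mem]
  have h_sin : ε ^ 2 ≤ 200 * sin θ :=
    calc ε ^ 2 ≤ ‖p₂‖ * infDist y {x | ∃ t : ℝ, x = t • p₂} := by
          rw [sq]; exact mul_le_mul h_norm h_dist.le hε (norm_nonneg _)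
      _ ≤ sin θ * (‖y‖ * ‖y - p₂‖) := norm_mul_infDist_line_le y p₂
      _ ≤ sin θ * (10 * 20) := by
          gcongr
          exact sin_angle_nonneg _ _
      _ = 200 * sin θ := by ring
  have h_exp : δ ^ (2 * ρ / n) = ε ^ 2 := by
    rw [← rpow_mul_natCast hδ.le, Nat.cast_ofNat, div_mul_eq_mul_div, mul_comm]
  rw [sub_zero, h_exp]
  have h_angle := sin_le_min_self_pi_sub (angle_nonneg y (y - p₂)) (angle_le_pi y (y - p₂))
  linarith
end
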